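/- Let G be a finite connected simple graph on n ≥ 2 vertices whose resistance curvature satisfies κ_i ≥ 0 for all vertices i and Σ_{v∈V} κ_v > 0. Then for all vertices y, z one has Ω_{yz} ≤ 2/(Σ_{v∈V} κ_v); equivalently the maximal commute time satisfies max_{y,z} commute(y,z) ≤ 4·|E|/(Σ_{v∈V} κ_v), where commute(y,z) = 2·|E|·Ω_{yz}. -/

import Mathlib

/-!
Write `M = Γ⁻¹`. The column difference `g = M (e_v - e_z)` sums to zero, so
`L g = Γ g = e_v - e_z`: `g` is subharmonic away from `v`, and the discrete maximum principle
on the connected graph gives `g y ≤ g v`, which unfolds to the triangle inequality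
`Ω y z ≤ Ω y v + Ω v z`. Averaging it against the nonnegative weights `κ v` and using `Ω κ = 1`
for the rows `y` and `z` yields `(∑ κ) Ω y z ≤ 2`.
-/

open Finset SimpleGraph Matrix

/-- The resistance matrix of a graph: `Ω i j = Γ⁻¹ i i + Γ⁻¹ j j - 2 Γ⁻¹ i j`
where `Γ = L + (1/n) J` with `L` the Laplacian and `J` the all-ones matrix. -/
noncomputable def resistanceMatrix {V : Type*} [Fintype V] [DecidableEq V]
    (G : SimpleGraph V) [DecidableRel G.Adj] : Matrix V V ℝ :=
  Matrix.of fun i j =>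
    letI Γinv := (G.lapMatrix ℝ + Matrix.of fun _ _ => (1 : ℝ) / Fintype.card V)⁻¹
    Γinv i i + Γinv j j - 2 * Γinv i j

namespace SimpleGraph

variable {V : Type*} [Fintype V] [DecidableEq V] (G : SimpleGraph V) [DecidableRel G.Adj]

noncomputable def gammaMatrix : Matrix V V ℝ :=
  G.lapMatrix ℝ + Matrix.of fun _ _ => (1 : ℝ) / Fintype.card V

lemma resistanceMatrix_apply (i j : V) :
    resistanceMatrix G i j =
      G.gammaMatrix⁻¹ i i + G.gammaMatrix⁻¹ j j - 2 * G.gammaMatrix⁻¹ i j :=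
  rfl

lemma isSymm_gammaMatrix : G.gammaMatrix.IsSymm :=
  (isSymm_lapMatrix (R := ℝ) G).add (by ext; rfl)

lemma isSymm_resistanceMatrix : (resistanceMatrix G).IsSymm := by
  ext i j
  simp only [transpose_apply, resistanceMatrix_apply, G.isSymm_gammaMatrix.inv.apply i j]
  ring

lemma sum_lapMatrix_mulVec (x : V → ℝ) : ∑ i, (G.lapMatrix ℝ *ᵥ x) i = 0 := by
  calc ∑ i, (G.lapMatrix ℝ *ᵥ x) i = (fun _ => 1) ⬝ᵥ (G.lapMatrix ℝ *ᵥ x) := by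
        simp [dotProduct]
    _ = ((G.lapMatrix ℝ)ᵀ *ᵥ fun _ => 1) ⬝ᵥ x := by rw [dotProduct_mulVec, mulVec_transpose]
    _ = 0 := by
        rw [(isSymm_lapMatrix (R := ℝ) G).eq, lapMatrix_mulVec_const_eq_zero, zero_dotProduct]

lemma gammaMatrix_mulVec (x : V → ℝ) :
    G.gammaMatrix *ᵥ x = G.lapMatrix ℝ *ᵥ x + fun _ => (∑ i, x i) / Fintype.card V := by
  rw [gammaMatrix, add_mulVec]
  congr 1
  ext i
  simp [mulVec, dotProduct, Finset.mul_sum, div_eq_inv_mul]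

lemma sum_gammaMatrix_mulVec [Nonempty V] (x : V → ℝ) :
    ∑ i, (G.gammaMatrix *ᵥ x) i = ∑ i, x i := by
  simp only [gammaMatrix_mulVec, Pi.add_apply, Finset.sum_add_distrib, sum_lapMatrix_mulVec,
    Finset.sum_const, Finset.card_univ, nsmul_eq_mul, zero_add]
  field_simp

lemma gammaMatrix_mulVec_of_sum_eq_zero {x : V → ℝ} (hx : ∑ i, x i = 0) :
    G.gammaMatrix *ᵥ x = G.lapMatrix ℝ *ᵥ x := by
  rw [gammaMatrix_mulVec, hx, zero_div]
  exact add_zero _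

lemma eq_of_adj_of_lapMatrix_mulVec_nonpos {g : V → ℝ} {j k : V} (hmax : ∀ i, g i ≤ g j)
    (hj : (G.lapMatrix ℝ *ᵥ g) j ≤ 0) (hadj : G.Adj j k) : g k = g j := by
  have hnonneg : ∀ u ∈ G.neighborFinset j, 0 ≤ g j - g u := fun u _ => sub_nonneg.mpr (hmax u)
  have hLj : (G.lapMatrix ℝ *ᵥ g) j = ∑ u ∈ G.neighborFinset j, (g j - g u) := by
    rw [lapMatrix_mulVec_apply, Finset.sum_sub_distrib, Finset.sum_const,
      card_neighborFinset_eq_degree, nsmul_eq_mul]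
  have hk := (Finset.sum_eq_zero_iff_of_nonneg hnonneg).mp
    (le_antisymm (hLj ▸ hj) (Finset.sum_nonneg hnonneg)) k ((G.mem_neighborFinset j k).mpr hadj)
  linarith

variable {G}

lemma Connected.isUnit_det_gammaMatrix (hconn : G.Connected) : IsUnit G.gammaMatrix.det := by
  have := hconn.nonempty
  rw [isUnit_iff_ne_zero, Ne, ← exists_mulVec_eq_zero_iff]
  rintro ⟨x, hx0, hx⟩
  have hsum : ∑ i, x i = 0 := by
    rw [← G.sum_gammaMatrix_mulVec, hx]
    simp
  have hconst : ∀ i j, x i = x j := fun i j =>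
    (G.lapMatrix_mulVec_eq_zero_iff_forall_reachable).mp
      (by rw [← gammaMatrix_mulVec_of_sum_eq_zero G hsum, hx]) i j (hconn.preconnected i j)
  apply hx0
  ext i
  have hcard : (Fintype.card V : ℝ) * x i = 0 := by
    rw [← hsum, Finset.sum_congr rfl fun j _ => hconst j i]
    simp
  simpa [Fintype.card_ne_zero] using hcard

lemma Connected.lapMatrix_mulVec_inv_gammaMatrix_mulVec (hconn : G.Connected) {b : V → ℝ}
    (hb : ∑ i, b i = 0) : G.lapMatrix ℝ *ᵥ (G.gammaMatrix⁻¹ *ᵥ b) = b := by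
  have := hconn.nonempty
  have hΓ : G.gammaMatrix *ᵥ (G.gammaMatrix⁻¹ *ᵥ b) = b := by
    rw [mulVec_mulVec, mul_nonsing_inv _ hconn.isUnit_det_gammaMatrix, one_mulVec]
  rw [← gammaMatrix_mulVec_of_sum_eq_zero G, hΓ]
  rw [← G.sum_gammaMatrix_mulVec, hΓ, hb]

lemma Connected.le_of_lapMatrix_mulVec_nonpos (hconn : G.Connected) {g : V → ℝ} {v : V}
    (h : ∀ j ≠ v, (G.lapMatrix ℝ *ᵥ g) j ≤ 0) (y : V) : g y ≤ g v := by
  have := hconn.nonempty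
  obtain ⟨i, hi⟩ := Finite.exists_max g
  by_contra! hlt
  obtain ⟨p⟩ := hconn.preconnected i v
  obtain ⟨d, -, hdS, hd'⟩ := p.exists_boundary_dart {j | g j = g i} rfl
    (fun hv => (hlt.trans_le (hi y)).ne hv)
  have hd : g d.fst = g i := hdS
  have hdv : d.fst ≠ v := fun hdv => (hlt.trans_le (hi y)).ne (hdv ▸ hd)
  exact hd' ((G.eq_of_adj_of_lapMatrix_mulVec_nonpos (fun k => hd ▸ hi k) (h _ hdv) d.adj).trans hd)

lemma Connected.resistanceMatrix_le_add (hconn : G.Connected) (y v z : V) :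
    resistanceMatrix G y z ≤ resistanceMatrix G y v + resistanceMatrix G v z := by
  set M := G.gammaMatrix⁻¹
  have hmax : (M *ᵥ (Pi.single v 1 - Pi.single z 1)) y ≤
      (M *ᵥ (Pi.single v 1 - Pi.single z 1)) v := by
    refine hconn.le_of_lapMatrix_mulVec_nonpos (fun j hj => ?_) y
    rw [hconn.lapMatrix_mulVec_inv_gammaMatrix_mulVec (by simp)]
    simp only [Pi.sub_apply, Pi.single_apply, hj, if_false, zero_sub, neg_nonpos]
    split_ifs <;> norm_num
  simp only [mulVec_sub, mulVec_single_one, Pi.sub_apply, col_apply] at hmax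
  simp only [resistanceMatrix_apply]
  linarith

end SimpleGraph

lemma Matrix.IsSymm.sum_mul_le_two_of_mulVec_eq_one {V : Type*} [Fintype V] {d : Matrix V V ℝ}
    (hsymm : d.IsSymm) (htri : ∀ x y z, d x z ≤ d x y + d y z) {κ : V → ℝ}
    (hκ : d *ᵥ κ = fun _ => 1) (hnonneg : ∀ i, 0 ≤ κ i) (y z : V) :
    (∑ v, κ v) * d y z ≤ 2 := by
  have hrow : ∀ i, ∑ v, d i v * κ v = 1 := fun i => congrFun hκ i
  calc (∑ v, κ v) * d y z = ∑ v, κ v * d y z := Finset.sum_mul ..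
    _ ≤ ∑ v, κ v * (d y v + d v z) :=
        Finset.sum_le_sum fun v _ => mul_le_mul_of_nonneg_left (htri y v z) (hnonneg v)
    _ = ∑ v, d y v * κ v + ∑ v, d z v * κ v := by
        rw [← Finset.sum_add_distrib]
        exact Finset.sum_congr rfl fun v _ => by rw [hsymm.apply z v]; ring
    _ = 2 := by rw [hrow, hrow]; norm_num

theorem commute_time_le_inv_total_curvature_general
    {V : Type*} [Fintype V] [DecidableEq V]
    (G : SimpleGraph V) [DecidableRel G.Adj]
    (hconn : G.Connected)
    (κ : V → ℝ) (hκ : resistanceMatrix G *ᵥ κ = fun _ => 1)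
    (hcurv : ∀ i, 0 ≤ κ i) (hsum : 0 < ∑ v, κ v) :
    ∀ y z : V,
      resistanceMatrix G y z ≤ 2 / (∑ v, κ v) ∧
      2 * G.edgeFinset.card * resistanceMatrix G y z ≤
        4 * G.edgeFinset.card / (∑ v, κ v) := by
  intro y z
  have hΩ : resistanceMatrix G y z ≤ 2 / ∑ v, κ v := by
    rw [le_div_iff₀ hsum, mul_comm]
    exact G.isSymm_resistanceMatrix.sum_mul_le_two_of_mulVec_eq_one hconn.resistanceMatrix_le_add
      hκ hcurv y z
  refine ⟨hΩ, ?_⟩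
  calc 2 * G.edgeFinset.card * resistanceMatrix G y z
      ≤ 2 * G.edgeFinset.card * (2 / ∑ v, κ v) := by gcongr
    _ = 4 * G.edgeFinset.card / ∑ v, κ v := by ring

/-- Refined commute time upper bound in terms of the total curvature: if the curvature
is nonnegative with positive sum, then `Ω y z ≤ 2/(∑ κ)` for all vertices, i.e. every
commute time `2 |E| Ω y z` is at most `4 |E| / (∑ κ)`. -/
theorem commute_time_le_inv_total_curvature
    {V : Type*} [Fintype V] [DecidableEq V]
    (G : SimpleGraph V) [DecidableRel G.Adj]
    (hconn : G.Connected) (hn : 2 ≤ Fintype.card V)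
    (κ : V → ℝ) (hκ : resistanceMatrix G *ᵥ κ = fun _ => 1)
    (hcurv : ∀ i, 0 ≤ κ i) (hsum : 0 < ∑ v, κ v) :
    ∀ y z : V,
      resistanceMatrix G y z ≤ 2 / (∑ v, κ v) ∧
      2 * G.edgeFinset.card * resistanceMatrix G y z ≤
        4 * G.edgeFinset.card / (∑ v, κ v) :=
  commute_time_le_inv_total_curvature_general G hconn κ hκ hcurv hsum
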